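/- arXiv:math/9811056 — 5 statements merged into one kernel-verified Lean document; each statement's English description precedes it below -/
import Mathlib

section
/- Every Freudenthal triple system (V, b, t) satisfies tr(p(x⊗x)²) = 24·q(x,x,x,x) for all x ∈ V, where p(u⊗v)(w) := t(u,v,w) − b(w,u)v − b(w,v)u. (In particular, for the degenerate system this identity holds even though the two-variable identity fails.) -/
/-- The endomorphism `p(x⊗y) : w ↦ t(x,y,w) − b(w,x)y − b(w,y)x` of a triple system. -/
def pOf {F V : Type*} [Field F] [AddCommGroup V] [Module F V]
    (b : V →ₗ[F] V →ₗ[F] F) (t : V →ₗ[F] V →ₗ[F] V →ₗ[F] V) (x y : V) : V →ₗ[F] V :=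
  t x y - (b.flip x).smulRight y - (b.flip y).smulRight x

/-- Trace of the rank-one map `w ↦ f w • v` is `f v`. -/
theorem trace_smulRight_aux {F V : Type*} [Field F] [AddCommGroup V] [Module F V]
    [FiniteDimensional F V] (f : V →ₗ[F] F) (v : V) :
    LinearMap.trace F V (f.smulRight v) = f v := by
  have h : f.smulRight v = (LinearMap.toSpanSingleton F V v) ∘ₗ f := by
    ext w; simp [LinearMap.toSpanSingleton]
  rw [h, LinearMap.trace_comp_comm']
  have h2 : f ∘ₗ LinearMap.toSpanSingleton F V v = (f v) • LinearMap.id := by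
    ext; simp [LinearMap.toSpanSingleton, smul_comm, mul_comm]
  rw [h2, map_smul, LinearMap.trace_id, Module.finrank_self]
  simp

set_option maxHeartbeats 2000000 in
/-- Every Freudenthal triple system `(V,b,t)` (56-dimensional,
`b` nondegenerate alternating, `t` symmetric trilinear, `q(x,y,z,w) = b(x,t(y,z,w))`
symmetric and not identically zero, FTS3) satisfies
`tr(p(x⊗x)²) = 24·q(x,x,x,x)` for all `x ∈ V`. -/
theorem fts_one_variable_trace_identity {F V : Type*} [Field F] [AddCommGroup V] [Module F V]
    [FiniteDimensional F V]
    (hchar2 : (2 : F) ≠ 0) (hchar3 : (3 : F) ≠ 0)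
    (hdim : Module.finrank F V = 56)
    (b : V →ₗ[F] V →ₗ[F] F)
    (halt : ∀ v : V, b v v = 0)
    (hnd : ∀ x : V, (∀ y : V, b y x = 0) → x = 0)
    (t : V →ₗ[F] V →ₗ[F] V →ₗ[F] V)
    (htsym12 : ∀ x y z : V, t x y z = t y x z)
    (htsym23 : ∀ x y z : V, t x y z = t x z y)
    (hqsym : ∀ x y z w : V, b x (t y z w) = b y (t x z w))
    (hFTS2 : ∃ x y z w : V, b x (t y z w) ≠ 0)
    (hFTS3 : ∀ x y : V, t (t x x x) x y = b y x • t x x x + b y (t x x x) • x) :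
    ∀ x : V, LinearMap.trace F V (pOf b t x x ∘ₗ pOf b t x x) = 24 * b x (t x x x) := by
  have hanti : ∀ u v : V, b u v = -b v u := by
    intro u v
    have h := halt (u + v)
    simp only [map_add, LinearMap.add_apply, halt] at h
    linear_combination h
  intro x
  have h12 : (12:F) ≠ 0 := by
    have : (12:F) = 2 * 2 * 3 := by norm_num
    rw [this]; exact mul_ne_zero (mul_ne_zero hchar2 hchar2) hchar3
  -- the linearization of FTS3 at `y = x`
  have key : ∀ w : V, (3:F) • t (t x x w) x x + t (t x x x) w x
      = b x w • t x x x + b x (t x x x) • w + (3 * b x (t x x w)) • x := by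
    intro w
    have h1 := hFTS3 (x + w) x
    have hm1 := hFTS3 (x - w) x
    have h2 := hFTS3 (x + (2:F) • w) x
    have hm2 := hFTS3 (x - (2:F) • w) x
    simp only [map_add, map_sub, map_smul, LinearMap.add_apply, LinearMap.sub_apply,
      LinearMap.smul_apply, smul_add, smul_sub, smul_smul, add_smul, sub_smul, smul_eq_mul, halt,
      htsym12, htsym23] at h1 hm1 h2 hm2 ⊢
    refine smul_right_injective V h12 ?_
    linear_combination (norm := module) (8:F) • h1 - (8:F) • hm1
      - (1:F) • h2 + (1:F) • hm2
  -- auxiliary scalar identities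
  have hq1 : ∀ w : V, b x (t x x w) = b w (t x x x) := by
    intro w
    have hperm : t x x w = t w x x := (htsym23 x x w).trans (htsym12 x w x)
    rw [hperm, hqsym x w x x]
  -- the operator identity `3 p² = q₄·id + 8 b(·,T₃)x − 8 b(·,x)T₃`
  have hop : (3:F) • (pOf b t x x ∘ₗ pOf b t x x)
      = (b x (t x x x)) • LinearMap.id
        + (8:F) • ((b.flip (t x x x)).smulRight x)
        - (8:F) • ((b.flip x).smulRight (t x x x)) := by
    ext w
    have hk := key w
    have h3 := hFTS3 x w
    have e1 : b (t x x w) x = - b x (t x x w) := hanti _ _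
    have e2 : b x w = - b w x := hanti x w
    have e3 : b x (t x x w) = b w (t x x x) := hq1 w
    simp only [pOf, LinearMap.smul_apply, LinearMap.coe_comp, Function.comp_apply,
      LinearMap.sub_apply, LinearMap.add_apply, LinearMap.smulRight_apply, LinearMap.flip_apply,
      LinearMap.id_apply, map_sub, map_add, map_smul, smul_sub, smul_add, smul_smul,
      smul_eq_mul, halt, htsym12, htsym23] at hk h3 ⊢
    simp only [e1, e2, e3] at hk h3 ⊢
    linear_combination (norm := module) hk - h3
  -- take traces
  have htr := congrArg (LinearMap.trace F V) hop
  simp only [map_smul, map_add, map_sub, smul_eq_mul] at htr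
  rw [LinearMap.trace_id, hdim, trace_smulRight_aux, trace_smulRight_aux,
    LinearMap.flip_apply, LinearMap.flip_apply, hanti (t x x x) x] at htr
  refine mul_left_cancel₀ hchar3 ?_
  rw [htr]; ring
end

section
/- Let (V,b,t) be a nondegenerate Freudenthal triple system with associated gift End(𝔐) = (End(V), σ, π), where π(φ_b(x⊗y)) := p(x⊗y). If the 4-linear form q is identically zero (equivalently t ≡ 0 by nondegeneracy of b), then for all v, v′, z ∈ V, setting a := φ_b(v⊗v) and a′ := φ_b(v′⊗v′), one has (a·π(a′) + a′·π(a))(z) = 2(a·a′ + a′·a)(z). In particular, axiom G2 (there exists skew a with a·π(a) ≠ 2a²) fails when q ≡ 0. -/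
/-- `φ_b(x⊗y)(w) = x·b(y,w)`. -/
def phiOf {F V : Type*} [Field F] [AddCommGroup V] [Module F V]
    (b : V →ₗ[F] V →ₗ[F] F) (x y : V) : V →ₗ[F] V :=
  (b y).smulRight x

/-- Suppose `(V,b,t)` is as in a Freudenthal triple system with V
56-dimensional, `b` nondegenerate alternating, `t` symmetric trilinear, and suppose
the 4-linear form `q(x,y,z,w) = b(x,t(y,z,w))` is identically zero.  Then with
`a = φ_b(v⊗v)`, `a′ = φ_b(v′⊗v′)`, `π(a) = p(v⊗v)`, `π(a′) = p(v′⊗v′)` one has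
`(a·π(a′) + a′·π(a))(z) = 2(a·a′ + a′·a)(z)` for all `v, v′, z`; in particular
`a·π(a) = 2a²` for all such skew elements `a`, i.e. axiom G2 fails. -/
theorem gift_G2_fails_when_q_zero {F V : Type*} [Field F] [AddCommGroup V] [Module F V]
    [FiniteDimensional F V]
    (hchar2 : (2 : F) ≠ 0) (hchar3 : (3 : F) ≠ 0)
    (hdim : Module.finrank F V = 56)
    (b : V →ₗ[F] V →ₗ[F] F)
    (halt : ∀ v : V, b v v = 0)
    (hnd : ∀ x : V, (∀ y : V, b y x = 0) → x = 0)
    (t : V →ₗ[F] V →ₗ[F] V →ₗ[F] V)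
    (htsym12 : ∀ x y z : V, t x y z = t y x z)
    (htsym23 : ∀ x y z : V, t x y z = t x z y)
    (hq0 : ∀ x y z w : V, b x (t y z w) = 0) :
    (∀ v v' z : V,
      phiOf b v v (pOf b t v' v' z) + phiOf b v' v' (pOf b t v v z)
        = (2 : F) • (phiOf b v v (phiOf b v' v' z) + phiOf b v' v' (phiOf b v v z))) ∧
    (∀ v z : V,
      phiOf b v v (pOf b t v v z) = (2 : F) • phiOf b v v (phiOf b v v z)) := by
  have ht : ∀ y z w : V, t y z w = 0 := fun y z w => hnd _ (fun x => hq0 x y z w)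
  have hskew : ∀ x y : V, b x y = - b y x := by
    intro x y
    have h := halt (x + y)
    simp only [map_add, LinearMap.add_apply, halt] at h
    linear_combination h
  have main : ∀ v v' z : V,
      phiOf b v v (pOf b t v' v' z) + phiOf b v' v' (pOf b t v v z)
        = (2 : F) • (phiOf b v v (phiOf b v' v' z) + phiOf b v' v' (phiOf b v v z)) := by
    intro v v' z
    simp only [pOf, phiOf, LinearMap.sub_apply, LinearMap.smulRight_apply,
      LinearMap.flip_apply, ht, map_sub, map_smul, smul_smul, zero_sub, smul_add,
      map_neg, map_zero, neg_sub, sub_neg_eq_add, smul_neg]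
    rw [hskew z v, hskew z v']
    module
  refine ⟨main, fun v z => ?_⟩
  apply smul_right_injective V hchar2
  show (2:F) • (phiOf b v v) ((pOf b t v v) z) = (2:F) • ((2:F) • (phiOf b v v) ((phiOf b v v) z))
  rw [two_smul F ((phiOf b v v) ((pOf b t v v) z)), main v v z]
  module
end

section
/- With notation as above, the axiom G1 holds for π = p∘φ_b⁻¹ on End(V): σ(π(a)) = π(σ(a)) = −π(a) for all a ∈ End(V). Equivalently, for all x, y, z, w ∈ V: b(p(x⊗y)z, w) = −b(z, p(x⊗y)w) and p(y⊗x) = p(x⊗y). -/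
/-- For a Freudenthal triple system `(V,b,t)` (with `b` nondegenerate
alternating, `t` symmetric trilinear and `q(x,y,z,w) := b(x,t(y,z,w))` symmetric),
axiom G1 holds for `π = p∘φ_b⁻¹`: equivalently, for all `x, y, z, w ∈ V`,
`b(p(x⊗y)z, w) = −b(z, p(x⊗y)w)` (i.e. `p(x⊗y)` is skew) and `p(y⊗x) = p(x⊗y)`. -/
theorem gift_G1_holds {F V : Type*} [Field F] [AddCommGroup V] [Module F V]
    (hchar2 : (2 : F) ≠ 0) (hchar3 : (3 : F) ≠ 0)
    (b : V →ₗ[F] V →ₗ[F] F)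
    (halt : ∀ v : V, b v v = 0)
    (hnd : ∀ x : V, (∀ y : V, b y x = 0) → x = 0)
    (t : V →ₗ[F] V →ₗ[F] V →ₗ[F] V)
    (htsym12 : ∀ x y z : V, t x y z = t y x z)
    (htsym23 : ∀ x y z : V, t x y z = t x z y)
    (hqsym : ∀ x y z w : V, b x (t y z w) = b y (t x z w)) :
    (∀ x y z w : V, b (pOf b t x y z) w = - b z (pOf b t x y w)) ∧
    (∀ x y : V, pOf b t y x = pOf b t x y) := by
  have hskew : ∀ u v : V, b u v = - b v u := by
    intro u v
    have h := halt (u + v)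
    simp only [map_add, LinearMap.add_apply, halt] at h
    linear_combination h
  constructor
  · intro x y z w
    have key : b w (t x y z) = b z (t x y w) := by
      calc b w (t x y z) = b x (t w y z) := hqsym _ _ _ _
        _ = b x (t y z w) := by rw [htsym12, htsym23]
        _ = b x (t z y w) := by rw [htsym12 y z w]
        _ = b z (t x y w) := hqsym _ _ _ _
    simp only [pOf, LinearMap.sub_apply, LinearMap.smulRight_apply, LinearMap.flip_apply,
      map_sub, map_smul, LinearMap.sub_apply, LinearMap.smul_apply, smul_eq_mul]
    rw [hskew (t x y z) w, key, hskew w x, hskew w y]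
    ring
  · intro x y
    ext w
    simp only [pOf, LinearMap.sub_apply, LinearMap.smulRight_apply, LinearMap.flip_apply]
    rw [htsym12 y x w]
    abel
end

section
/- Let (V,b,t) be a Freudenthal triple system with π = p∘φ_b⁻¹ as above. An element d ∈ End(V) with σ(d) = −d satisfies the derivation axiom GD (π(da) − π(ad) = d·π(a) − π(a)·d for all a ∈ End(V)) if and only if d is a derivation of the triple system, i.e., d(t(u,v,w)) = t(du,v,w) + t(u,dv,w) + t(u,v,dw) for all u,v,w ∈ V. -/
/-- Let `(V,b,t)` be a Freudenthal triple system and let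
`π : End(V) → End(V)` be the linear map with `π(φ_b(x⊗y)) = p(x⊗y)` (i.e. `π = p∘φ_b⁻¹`,
where `φ_b(x⊗y)(w) = x·b(y,w)`).  A skew element `d ∈ End(V)` (`σ(d) = −d`, i.e.
`b(dv,w) = −b(v,dw)`) satisfies the derivation axiom GD
(`π(da) − π(ad) = dπ(a) − π(a)d` for all `a`) if and only if `d` is a derivation of the
triple system: `d(t(u,v,w)) = t(du,v,w) + t(u,dv,w) + t(u,v,dw)`. -/
theorem gift_GD_iff_derivation {F V : Type*} [Field F] [AddCommGroup V] [Module F V]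
    [FiniteDimensional F V]
    (hchar2 : (2 : F) ≠ 0) (hchar3 : (3 : F) ≠ 0)
    (b : V →ₗ[F] V →ₗ[F] F)
    (halt : ∀ v : V, b v v = 0)
    (hnd : ∀ x : V, (∀ y : V, b y x = 0) → x = 0)
    (t : V →ₗ[F] V →ₗ[F] V →ₗ[F] V)
    (htsym12 : ∀ x y z : V, t x y z = t y x z)
    (htsym23 : ∀ x y z : V, t x y z = t x z y)
    (hqsym : ∀ x y z w : V, b x (t y z w) = b y (t x z w))
    (π : (V →ₗ[F] V) →ₗ[F] (V →ₗ[F] V))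
    (hπ : ∀ x y : V, π ((b y).smulRight x) = pOf b t x y)
    (d : V →ₗ[F] V)
    (hdskew : ∀ v w : V, b (d v) w = - b v (d w)) :
    (∀ a : V →ₗ[F] V, π (d ∘ₗ a) - π (a ∘ₗ d) = d ∘ₗ π a - π a ∘ₗ d) ↔
    (∀ u v w : V, d (t u v w) = t (d u) v w + t u (d v) w + t u v (d w)) := by
  have hanti : ∀ v w : V, b v w = - b w v := by
    intro v w
    have h := halt (v + w)
    simp only [map_add, LinearMap.add_apply, halt] at h
    linear_combination h
  -- key rank-one equivalence
  have key : ∀ x y : V,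
      (π (d ∘ₗ (b y).smulRight x) - π ((b y).smulRight x ∘ₗ d)
        = d ∘ₗ π ((b y).smulRight x) - π ((b y).smulRight x) ∘ₗ d)
      ↔ ∀ w, d (t x y w) = t (d x) y w + t x (d y) w + t x y (d w) := by
    intro x y
    have h1 : d ∘ₗ (b y).smulRight x = (b y).smulRight (d x) := by
      ext w; simp
    have h2 : ((b y).smulRight x) ∘ₗ d = -((b (d y)).smulRight x) := by
      ext w
      simp only [LinearMap.comp_apply, LinearMap.smulRight_apply, LinearMap.neg_apply]
      rw [hdskew y w]
      simp
    rw [h1, h2, map_neg, sub_neg_eq_add, hπ, hπ, hπ]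
    rw [LinearMap.ext_iff]
    constructor
    · intro h w
      have hw := h w
      simp only [pOf, LinearMap.add_apply, LinearMap.sub_apply, LinearMap.comp_apply,
        LinearMap.smulRight_apply, LinearMap.flip_apply, map_sub, map_smul,
        hdskew w] at hw
      linear_combination (norm := module) -hw
    · intro h w
      have hw := h w
      simp only [pOf, LinearMap.add_apply, LinearMap.sub_apply, LinearMap.comp_apply,
        LinearMap.smulRight_apply, LinearMap.flip_apply, map_sub, map_smul,
        hdskew w]
      rw [hw]
      module
  constructor
  · intro hGD u v w
    exact (key u v).mp (hGD _) w
  · intro hder a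
    -- rank-one maps span
    have hbinj : Function.Injective b := by
      intro v v' h
      have : b (v - v') = 0 := by rw [map_sub, h, sub_self]
      have hz : v - v' = 0 := by
        apply hnd
        intro y
        rw [hanti, this]
        simp
      exact sub_eq_zero.mp hz
    have hbsurj : Function.Surjective b := by
      have := (LinearMap.injective_iff_surjective_of_finrank_eq_finrank
        (V₂ := Module.Dual F V) (f := b) Subspace.dual_finrank_eq.symm).mp hbinj
      exact this
    let S : Submodule F (V →ₗ[F] V) :=
      { carrier := {a | π (d ∘ₗ a) - π (a ∘ₗ d) = d ∘ₗ π a - π a ∘ₗ d}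
        add_mem' := by
          intro p q hp hq
          simp only [Set.mem_setOf_eq] at *
          simp only [LinearMap.comp_add, LinearMap.add_comp, map_add] at *
          rw [show π (d ∘ₗ p) + π (d ∘ₗ q) - (π (p ∘ₗ d) + π (q ∘ₗ d))
              = (π (d ∘ₗ p) - π (p ∘ₗ d)) + (π (d ∘ₗ q) - π (q ∘ₗ d)) by abel,
            hp, hq]
          abel
        zero_mem' := by
          simp only [Set.mem_setOf_eq, LinearMap.comp_zero, LinearMap.zero_comp, map_zero,
            sub_self]
        smul_mem' := by
          intro c p hp
          simp only [Set.mem_setOf_eq] at *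
          simp only [LinearMap.comp_smul, LinearMap.smul_comp, map_smul]
          rw [← smul_sub, hp, smul_sub] }
    have hspan : ∀ a : V →ₗ[F] V, a ∈ S := by
      intro a
      let B := Module.Basis.ofVectorSpace F V
      have ha : a = ∑ i, (B.coord i).smulRight (a (B i)) := by
        ext w
        simp only [LinearMap.coe_sum, Finset.sum_apply, LinearMap.smulRight_apply,
          Module.Basis.coord_apply]
        conv_lhs => rw [← B.sum_repr w]
        rw [map_sum]
        simp
      rw [ha]
      apply sum_mem
      intro i _
      obtain ⟨y, hy⟩ := hbsurj (B.coord i)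
      rw [← hy]
      exact (key (a (B i)) y).mpr (fun w => hder _ _ w)
    exact hspan a
end

section
/- Let (V,b,t) be a Freudenthal triple system with π = p∘φ_b⁻¹, and for λ ∈ F* consider the rescaled system (V, λb, λt). Then the map π_λ constructed from (V, λb, λt) equals π; that is, the map into End(𝔐) depends only on the similarity class of 𝔐. -/
/-- Let `(V,b,t)` be a Freudenthal triple system and `λ ∈ F*`.
If `π` is the linear map on `End(V)` with `π(φ_b(x⊗y)) = p(x⊗y)` (built from `(V,b,t)`),
and `π'` is the corresponding map built from the rescaled system `(V, λb, λt)`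
(so `π'(φ_{λb}(x⊗y)) = p_λ(x⊗y) = λ·p(x⊗y)`, since `φ_{λb}(x⊗y) = λ·φ_b(x⊗y)`),
then `π' = π`: the gift `End(𝔐)` depends only on the similarity class of `𝔐`. -/
theorem gift_pi_similarity_invariant {F V : Type*} [Field F] [AddCommGroup V] [Module F V]
    [FiniteDimensional F V]
    (hchar2 : (2 : F) ≠ 0) (hchar3 : (3 : F) ≠ 0)
    (b : V →ₗ[F] V →ₗ[F] F)
    (halt : ∀ v : V, b v v = 0)
    (hnd : ∀ x : V, (∀ y : V, b y x = 0) → x = 0)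
    (t : V →ₗ[F] V →ₗ[F] V →ₗ[F] V)
    (htsym12 : ∀ x y z : V, t x y z = t y x z)
    (htsym23 : ∀ x y z : V, t x y z = t x z y)
    (lam : F) (hlam : lam ≠ 0)
    (π π' : (V →ₗ[F] V) →ₗ[F] (V →ₗ[F] V))
    (hπ : ∀ x y : V, π ((b y).smulRight x) = pOf b t x y)
    (hπ' : ∀ x y : V, π' ((lam • b y).smulRight x) = lam • pOf b t x y) :
    π' = π := by
  -- π and π' agree on rank-one maps `(b y).smulRight x`
  have key : ∀ x y : V, π' ((b y).smulRight x) = π ((b y).smulRight x) := by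
    intro x y
    have h1 : (lam • b y).smulRight x = lam • (b y).smulRight x := by
      ext w; simp [smul_smul]
    have h2 := hπ' x y
    rw [h1, map_smul, ← hπ x y] at h2
    exact smul_right_injective _ hlam h2
  -- `b` is skew-symmetric
  have hskew : ∀ y z : V, b z y = - b y z := by
    intro y z
    have h := halt (y + z)
    simp only [map_add, LinearMap.add_apply, halt y, halt z] at h
    linear_combination h
  -- `b : V →ₗ[F] Dual F V` is injective
  have hinj : Function.Injective b := by
    rw [← LinearMap.ker_eq_bot, LinearMap.ker_eq_bot']
    intro y hy
    apply hnd
    intro z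
    rw [hskew, hy]
    simp
  -- hence surjective onto the dual (finite dimension)
  have hsurj : Function.Surjective b :=
    (LinearMap.injective_iff_surjective_of_finrank_eq_finrank
      (Subspace.dual_finrank_eq (K := F) (V := V)).symm).mp hinj
  -- every endomorphism is a sum of such rank-one maps
  ext g w
  set B := Module.finBasis F V with hB
  choose y hy using fun i => hsurj (B.coord i)
  have hg : g = ∑ i, (b (y i)).smulRight (g (B i)) := by
    ext v
    simp only [LinearMap.coe_sum, Finset.sum_apply, LinearMap.smulRight_apply, hy,
      Module.Basis.coord_apply]
    conv_lhs => rw [← B.sum_repr v]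
    simp only [map_sum, map_smul]
  rw [hg, map_sum, map_sum]
  simp only [key]
end
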